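/- Let X be an S-open subset of a product ∏_{t∈T} X_t of sets and let (Y,d) be a metric space. Then a mapping f : X → Y is continuous with respect to the S-topology on X if and only if for every topology T' on X the mapping f : (X,T') → Y is strongly separately continuous. -/

import Mathlib

open Function Filter Topology

/-! An `S`-open set is one closed under changing a single coordinate, so on an `S`-open `A` the
`S`-topology is the partition topology of the equivalence generated by such changes, and a map into
a `T₁` space is `S`-continuous iff it is invariant under them. For the indiscrete topology, strong
separate continuity says exactly the same; conversely, invariance makes `x ↦ d(f x, f x_t^a)`
identically zero, so strong separate continuity holds for every topology. -/

/-- `Sigma1 x` (σ₁(x)): the set of points differing from `x` in at most one coordinate. -/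
def Sigma1 {T : Type*} {X : T → Type*} (x : ∀ t, X t) : Set (∀ t, X t) :=
  {y | {t | y t ≠ x t}.Subsingleton}

/-- A set `A` is `S`-open if `σ₁(x) ⊆ A` for every `x ∈ A`. -/
def SOpen {T : Type*} {X : T → Type*} (A : Set (∀ t, X t)) : Prop :=
  ∀ x ∈ A, Sigma1 x ⊆ A

theorem update_mem {T : Type*} [DecidableEq T] {X : T → Type*} {A : Set (∀ t, X t)}
    (hA : SOpen A) {x : ∀ t, X t} (hx : x ∈ A) (t : T) (v : X t) :
    Function.update x t v ∈ A := by
  apply hA x hx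
  intro s hs s' hs'
  simp only [Set.mem_setOf_eq] at hs hs'
  have h1 : s = t := by
    by_contra h
    exact hs (Function.update_of_ne h v x)
  have h2 : s' = t := by
    by_contra h
    exact hs' (Function.update_of_ne h v x)
  rw [h1, h2]

/-- The point `x_t^v`: `x` with its `t`-th coordinate replaced by `v`, as an element
of the `S`-open set `A`. -/
def updPt {T : Type*} [DecidableEq T] {X : T → Type*} {A : Set (∀ t, X t)}
    (hA : SOpen A) (x : ↥A) (t : T) (v : X t) : ↥A :=
  ⟨Function.update x.1 t v, update_mem hA x.2 t v⟩

/-- `f : (A, T') → Y` is strongly separately continuous at `a` (w.r.t. every variable):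
for each `t`, `lim_{x → a} dist (f x) (f (x_t^a)) = 0`, the limit taken in `T'`. -/
def StrSepContAt {T : Type*} [DecidableEq T] {X : T → Type*} {A : Set (∀ t, X t)}
    (hA : SOpen A) (T' : TopologicalSpace ↥A) {Y : Type*} [MetricSpace Y]
    (f : ↥A → Y) (a : ↥A) : Prop :=
  ∀ t : T, Filter.Tendsto (fun x : ↥A => dist (f x) (f (updPt hA x t (a.1 t))))
    (@nhds _ T' a) (nhds 0)

/-- The `S`-topology on the product `∀ t, X t`, whose open sets are the `S`-open sets. -/
def sTop (T : Type*) (X : T → Type*) : TopologicalSpace (∀ t, X t) where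
  IsOpen := SOpen
  isOpen_univ := by intro x _ y _; trivial
  isOpen_inter := by
    intro A B hA hB x hx y hy
    exact ⟨hA x hx.1 hy, hB x hx.2 hy⟩
  isOpen_sUnion := by
    intro S hS x hx y hy
    obtain ⟨A, hAS, hxA⟩ := hx
    exact ⟨A, hAS, hS A hAS x hxA hy⟩

theorem sOpen_iff_forall_update_mem {T : Type*} [DecidableEq T] {X : T → Type*}
    {V : Set (∀ t, X t)} : SOpen V ↔ ∀ x ∈ V, ∀ t (v : X t), update x t v ∈ V := by
  refine ⟨fun hV x hx t v => update_mem hV hx t v, fun hV x hx y hy => ?_⟩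
  by_cases hyx : ∀ t, y t = x t
  · rwa [funext hyx]
  obtain ⟨t, ht⟩ := not_forall.mp hyx
  have hy_eq : y = update x t (y t) :=
    eq_update_iff.mpr ⟨rfl, fun s hs => not_not.mp fun hne => hs (hy hne ht)⟩
  exact hy_eq ▸ hV x hx t (y t)

section SOpenSubset

variable {T : Type*} [DecidableEq T] {X : T → Type*} {A : Set (∀ t, X t)} (hA : SOpen A)

-- so that `A` carries the subspace topology of the `S`-topology
attribute [local instance] sTop

theorem updPt_val_self (x : ↥A) (t : T) (v : X t) : (updPt hA x t v).1 t = v :=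
  update_self t v x.1

theorem isOpen_induced_sTop_iff {U : Set ↥A} :
    IsOpen U ↔ ∀ x ∈ U, ∀ t (v : X t), updPt hA x t v ∈ U := by
  rw [isOpen_induced_iff]
  constructor
  · rintro ⟨V, hV, rfl⟩ x hx t v
    exact update_mem hV hx t v
  · intro hU
    refine ⟨Subtype.val '' U, ?_, Set.preimage_image_eq U Subtype.val_injective⟩
    refine sOpen_iff_forall_update_mem.mpr ?_
    rintro _ ⟨x, hx, rfl⟩ t v
    exact ⟨updPt hA x t v, hU x hx t v, rfl⟩

def UpdateInvariant {Y : Type*} (f : ↥A → Y) : Prop :=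
  ∀ (x : ↥A) (t : T) (v : X t), f (updPt hA x t v) = f x

theorem continuous_sTop_iff_updateInvariant {Y : Type*} [TopologicalSpace Y] [T1Space Y]
    (f : ↥A → Y) : Continuous f ↔ UpdateInvariant hA f := by
  constructor
  · intro hf x t v
    by_contra hne
    have hopen := (isOpen_induced_sTop_iff hA).mp
      (hf.isOpen_preimage _ (isClosed_singleton (x := f (updPt hA x t v))).isOpen_compl)
    exact hopen x (Ne.symm hne) t v rfl
  · intro hf
    refine continuous_def.mpr fun W _ =>
      (isOpen_induced_sTop_iff hA).mpr fun x hx t v => ?_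
    rw [Set.mem_preimage, hf]
    exact hx

theorem forall_strSepContAt_iff_updateInvariant {Y : Type*} [MetricSpace Y] (f : ↥A → Y) :
    (∀ (T' : TopologicalSpace ↥A) (a : ↥A), StrSepContAt hA T' f a) ↔ UpdateInvariant hA f := by
  constructor
  · intro h x t v
    have hpure : pure x ≤ @nhds _ ⊤ (updPt hA x t v) := by
      rw [_root_.nhds_top]
      exact le_top
    have hlim : Tendsto (fun y : ↥A => dist (f y) (f (updPt hA y t v))) (pure x) (𝓝 0) := by
      have := (h ⊤ (updPt hA x t v) t).mono_left hpure
      rwa [updPt_val_self] at this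
    exact (dist_eq_zero.mp (pure_le_nhds_iff.mp hlim)).symm
  · intro hf T' a t
    unfold UpdateInvariant at hf
    simp only [hf, dist_self]
    exact tendsto_const_nhds

end SOpenSubset

/-- `f` is continuous with respect to the S-topology on an S-open set `A` iff for every
topology `T'` on `A`, `f : (A, T') → Y` is strongly separately continuous. -/
theorem continuous_sTop_iff_strSepCont {T : Type*} [DecidableEq T] {X : T → Type*}
    {A : Set (∀ t, X t)} (hA : SOpen A) {Y : Type*} [MetricSpace Y] (f : ↥A → Y) :
    @Continuous _ _ (TopologicalSpace.induced Subtype.val (sTop T X)) _ f ↔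
      ∀ (T' : TopologicalSpace ↥A) (a : ↥A), StrSepContAt hA T' f a :=
  (continuous_sTop_iff_updateInvariant hA f).trans
    (forall_strSepContAt_iff_updateInvariant hA f).symm
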